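/- arXiv:1501.03479 — 4 statements merged into one kernel-verified Lean document; each statement's English description precedes it below -/
import Mathlib

section
/- For all y, y' ∈ ℝ^d, the supremum S(y, y') = sup over x (with y+x ≠ 0 ≠ y'+x) of ‖x‖·‖(y + x)/‖y + x‖ − (y' + x)/‖y' + x‖‖ is finite, and moreover S(y, y') ≤ C·(‖y‖ + ‖y'‖) where C = sup{ S(z, z') : ‖z‖ + ‖z'‖ = 1 } is finite. -/
/-!
Write `a = y + x`, `b = y' + x`. The unit vectors of `a` and `b` differ by at most `2` in norm,
and by at most `2‖a - b‖ / ‖a‖ = 2‖y - y'‖ / ‖a‖`; since `‖x‖ ≤ ‖a‖ + ‖y‖`, each term of the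
supremum is at most `2‖y - y'‖ + 2‖y‖ ≤ 4 (‖y‖ + ‖y'‖)`. This gives finiteness of `S` and of `C`.
Replacing `x` by `t⁻¹ • x` shows `S y y' ≤ t S (t⁻¹ y) (t⁻¹ y')`, and `t = ‖y‖ + ‖y'‖` puts the
rescaled pair on the set defining `C`.
-/

open scoped ENNReal

noncomputable def S (d : ℕ) (y y' : EuclideanSpace ℝ (Fin d)) : ℝ≥0∞ :=
  ⨆ x : {x : EuclideanSpace ℝ (Fin d) // y + x ≠ 0 ∧ y' + x ≠ 0},
    ENNReal.ofReal (‖x.1‖ * ‖‖y + x.1‖⁻¹ • (y + x.1) - ‖y' + x.1‖⁻¹ • (y' + x.1)‖)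

noncomputable def Cconst (d : ℕ) : ℝ≥0∞ :=
  ⨆ p : {p : EuclideanSpace ℝ (Fin d) × EuclideanSpace ℝ (Fin d) // ‖p.1‖ + ‖p.2‖ = 1},
    S d p.1.1 p.1.2

section NormedSpace

variable {E : Type*} [NormedAddCommGroup E] [NormedSpace ℝ E]

lemma norm_inv_norm_smul_sub_le {a b : E} (ha : a ≠ 0) (hb : b ≠ 0) :
    ‖‖a‖⁻¹ • a - ‖b‖⁻¹ • b‖ ≤ 2 * ‖a - b‖ / ‖a‖ := by
  have hna : 0 < ‖a‖ := norm_pos_iff.2 ha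
  have hnb : 0 < ‖b‖ := norm_pos_iff.2 hb
  have hscale : ‖(‖a‖⁻¹ - ‖b‖⁻¹) • b‖ ≤ ‖a - b‖ / ‖a‖ := by
    rw [norm_smul, Real.norm_eq_abs, inv_sub_inv hna.ne' hnb.ne', abs_div, abs_mul,
      abs_of_pos hna, abs_of_pos hnb, norm_sub_rev a b]
    calc |‖b‖ - ‖a‖| / (‖a‖ * ‖b‖) * ‖b‖ = |‖b‖ - ‖a‖| / ‖a‖ := by field_simp
      _ ≤ ‖b - a‖ / ‖a‖ := by gcongr; exact abs_norm_sub_norm_le b a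
  calc ‖‖a‖⁻¹ • a - ‖b‖⁻¹ • b‖ = ‖‖a‖⁻¹ • (a - b) + (‖a‖⁻¹ - ‖b‖⁻¹) • b‖ := by
        congr 1; module
    _ ≤ ‖‖a‖⁻¹ • (a - b)‖ + ‖(‖a‖⁻¹ - ‖b‖⁻¹) • b‖ := norm_add_le _ _
    _ ≤ ‖a - b‖ / ‖a‖ + ‖a - b‖ / ‖a‖ := by
        rw [norm_smul, norm_inv, norm_norm, ← div_eq_inv_mul]
        exact add_le_add_right hscale _
    _ = 2 * ‖a - b‖ / ‖a‖ := by ring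

lemma norm_inv_norm_smul_sub_le_two (a b : E) : ‖‖a‖⁻¹ • a - ‖b‖⁻¹ • b‖ ≤ 2 := by
  have unit_le (v : E) : ‖‖v‖⁻¹ • v‖ ≤ 1 :=
    mem_closedBall_zero_iff.1 (inv_norm_smul_mem_unitClosedBall v)
  linarith [norm_sub_le (‖a‖⁻¹ • a) (‖b‖⁻¹ • b), unit_le a, unit_le b]

lemma norm_mul_norm_inv_norm_smul_add_sub_le {y y' x : E} (hy : y + x ≠ 0) (hy' : y' + x ≠ 0) :
    ‖x‖ * ‖‖y + x‖⁻¹ • (y + x) - ‖y' + x‖⁻¹ • (y' + x)‖ ≤ 4 * (‖y‖ + ‖y'‖) := by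
  set D := ‖‖y + x‖⁻¹ • (y + x) - ‖y' + x‖⁻¹ • (y' + x)‖
  have hna : 0 < ‖y + x‖ := norm_pos_iff.2 hy
  have hx : ‖x‖ ≤ ‖y + x‖ + ‖y‖ := by
    simpa using norm_sub_le (y + x) y
  have hdiff : ‖(y + x) - (y' + x)‖ ≤ ‖y‖ + ‖y'‖ := by
    simpa using norm_sub_le y y'
  have hD : ‖y + x‖ * D ≤ 2 * ‖(y + x) - (y' + x)‖ := by
    have := norm_inv_norm_smul_sub_le hy hy'
    rwa [le_div_iff₀ hna, mul_comm] at this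
  have hD2 : D ≤ 2 := norm_inv_norm_smul_sub_le_two _ _
  calc ‖x‖ * D ≤ (‖y + x‖ + ‖y‖) * D := by gcongr
    _ = ‖y + x‖ * D + ‖y‖ * D := add_mul _ _ _
    _ ≤ 2 * (‖y‖ + ‖y'‖) + ‖y‖ * 2 :=
        add_le_add (hD.trans (by linarith)) (mul_le_mul_of_nonneg_left hD2 (norm_nonneg y))
    _ ≤ 4 * (‖y‖ + ‖y'‖) := by linarith [norm_nonneg y']

lemma inv_norm_smul_pos_smul {r : ℝ} (hr : 0 < r) (a : E) :
    ‖r • a‖⁻¹ • (r • a) = ‖a‖⁻¹ • a := by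
  rcases eq_or_ne a 0 with rfl | ha
  · simp
  · exact (sameRay_iff_inv_norm_smul_eq_of_ne (smul_ne_zero hr.ne' ha) ha).1
      (SameRay.sameRay_pos_smul_left a hr)

end NormedSpace

section Bounds

variable {d : ℕ}

lemma ofReal_le_S {y y' x : EuclideanSpace ℝ (Fin d)} (hy : y + x ≠ 0) (hy' : y' + x ≠ 0) :
    ENNReal.ofReal (‖x‖ * ‖‖y + x‖⁻¹ • (y + x) - ‖y' + x‖⁻¹ • (y' + x)‖) ≤ S d y y' :=
  le_iSup (fun x : {x // y + x ≠ 0 ∧ y' + x ≠ 0} =>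
    ENNReal.ofReal (‖x.1‖ * ‖‖y + x.1‖⁻¹ • (y + x.1) - ‖y' + x.1‖⁻¹ • (y' + x.1)‖)) ⟨x, hy, hy'⟩

lemma S_le (y y' : EuclideanSpace ℝ (Fin d)) :
    S d y y' ≤ ENNReal.ofReal (4 * (‖y‖ + ‖y'‖)) :=
  iSup_le fun x => ENNReal.ofReal_le_ofReal (norm_mul_norm_inv_norm_smul_add_sub_le x.2.1 x.2.2)

lemma S_le_ofReal_mul_S_inv_smul {t : ℝ} (ht : 0 < t) (y y' : EuclideanSpace ℝ (Fin d)) :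
    S d y y' ≤ ENNReal.ofReal t * S d (t⁻¹ • y) (t⁻¹ • y') := by
  apply iSup_le
  rintro ⟨x, hy, hy'⟩
  have hti : 0 < t⁻¹ := inv_pos.2 ht
  have hunit (v : EuclideanSpace ℝ (Fin d)) :
      ‖t⁻¹ • v + t⁻¹ • x‖⁻¹ • (t⁻¹ • v + t⁻¹ • x) = ‖v + x‖⁻¹ • (v + x) := by
    rw [← smul_add, inv_norm_smul_pos_smul hti]
  have hx : ‖x‖ = t * ‖t⁻¹ • x‖ := by
    rw [norm_smul, Real.norm_of_nonneg hti.le, mul_inv_cancel_left₀ ht.ne']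
  have hlift := ofReal_le_S (y := t⁻¹ • y) (y' := t⁻¹ • y') (x := t⁻¹ • x)
    (by rwa [← smul_add, smul_ne_zero_iff_right hti.ne'])
    (by rwa [← smul_add, smul_ne_zero_iff_right hti.ne'])
  rw [hunit, hunit] at hlift
  rw [hx, mul_assoc, ENNReal.ofReal_mul ht.le]
  gcongr

lemma Cconst_le_four : Cconst d ≤ 4 :=
  iSup_le fun ⟨(z, z'), hzz'⟩ => by simpa [hzz'] using S_le (d := d) z z'

lemma S_le_Cconst_mul (y y' : EuclideanSpace ℝ (Fin d)) :
    S d y y' ≤ Cconst d * ENNReal.ofReal (‖y‖ + ‖y'‖) := by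
  rcases (by positivity : 0 ≤ ‖y‖ + ‖y'‖).eq_or_lt with ht | ht
  · simpa [← ht] using S_le y y'
  set t := ‖y‖ + ‖y'‖
  have hunit : ‖t⁻¹ • y‖ + ‖t⁻¹ • y'‖ = 1 := by
    rw [norm_smul, norm_smul, ← mul_add, Real.norm_of_nonneg (inv_pos.2 ht).le,
      inv_mul_cancel₀ ht.ne']
  have hC : S d (t⁻¹ • y) (t⁻¹ • y') ≤ Cconst d :=
    le_iSup (fun p : {p : EuclideanSpace ℝ (Fin d) × EuclideanSpace ℝ (Fin d) //
      ‖p.1‖ + ‖p.2‖ = 1} => S d p.1.1 p.1.2) ⟨(t⁻¹ • y, t⁻¹ • y'), hunit⟩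
  calc S d y y' ≤ ENNReal.ofReal t * S d (t⁻¹ • y) (t⁻¹ • y') :=
        S_le_ofReal_mul_S_inv_smul ht y y'
    _ ≤ Cconst d * ENNReal.ofReal t := by rw [mul_comm]; gcongr

end Bounds

theorem stmt_9 (d : ℕ) :
    Cconst d < ⊤ ∧ ∀ y y' : EuclideanSpace ℝ (Fin d),
      S d y y' < ⊤ ∧ S d y y' ≤ Cconst d * ENNReal.ofReal (‖y‖ + ‖y'‖) :=
  ⟨Cconst_le_four.trans_lt ENNReal.ofNat_lt_top, fun y y' =>
    ⟨(S_le y y').trans_lt ENNReal.ofReal_lt_top, S_le_Cconst_mul y y'⟩⟩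
end

section
/- Let 0 < α < 1 and let k ≥ 1, d ≥ 1 be integers. Then the sum over all tuples (x₁, …, x_{k+1}) ∈ (ℤ^d)^{k+1} with x₁ = 0 and x_{k+1} = 0 of the product over i = 1,…,k of (‖x_i‖ + ‖x_{i+1}‖)·α^{‖x_i − x_{i+1}‖} is finite. -/
/-!
Substitute the increments `y i = x i - x (i + 1)`, which determine `x` since `x 0 = 0`. Every
`‖x m‖` is at most `S = ∑ ‖y i‖`, so with `α = exp (-c)` the summand is at most
`(2S)^k exp (-c S) ≤ C exp (-c S / 2) = C ∏ exp (-c ‖y i‖ / 2)` with `C` depending only on `k`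
and `c` (bound `S^k` by `exp (c S / 2)` through the exponential series), and the right-hand side is
summable over `(ℤ^d)^k` because `exp (-c ‖v‖ / 2)` is dominated by a product of geometric
sequences in the coordinates of `v`.
-/

noncomputable def znorm {d : ℕ} (v : Fin d → ℤ) : ℝ :=
  ‖(WithLp.equiv 2 (Fin d → ℝ)).symm fun i => (v i : ℝ)‖

open Finset Real
open scoped Nat

theorem summable_pi_prod_of_nonneg {ι : Type*} [Fintype ι] {κ : ι → Type*} {f : ∀ i, κ i → ℝ}
    (hf₀ : ∀ i, 0 ≤ f i) (hf : ∀ i, Summable (f i)) :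
    Summable fun x : ∀ i, κ i => ∏ i, f i (x i) := by
  classical
  refine summable_of_sum_le (c := ∏ i, ∑' b, f i b)
    (fun x => prod_nonneg fun i _ => hf₀ i (x i)) fun u => ?_
  calc ∑ x ∈ u, ∏ i, f i (x i)
      ≤ ∑ x ∈ Fintype.piFinset fun i => u.image (· i), ∏ i, f i (x i) :=
        sum_le_sum_of_subset_of_nonneg
          (fun x hx => Fintype.mem_piFinset.2 fun i => mem_image_of_mem (· i) hx)
          fun x _ _ => prod_nonneg fun i _ => hf₀ i (x i)
    _ = ∏ i, ∑ b ∈ u.image (· i), f i b := (prod_univ_sum _ _).symm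
    _ ≤ ∏ i, ∑' b, f i b :=
        prod_le_prod (fun i _ => sum_nonneg fun b _ => hf₀ i b)
          fun i _ => (hf i).sum_le_tsum _ fun b _ => hf₀ i b

theorem summable_exp_neg_mul_abs {c : ℝ} (hc : 0 < c) :
    Summable fun n : ℤ => exp (-c * |(n : ℝ)|) := by
  have h : Summable fun n : ℕ => exp (n * -c) := summable_exp_nat_mul_iff.2 (neg_neg_of_pos hc)
  refine .of_nat_of_neg ?_ ?_ <;> simpa [mul_comm] using h

noncomputable def intToEuclidean (d : ℕ) : (Fin d → ℤ) →+ EuclideanSpace ℝ (Fin d) :=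
  AddMonoidHom.mk' (fun v => (WithLp.equiv 2 (Fin d → ℝ)).symm fun i => (v i : ℝ))
    fun u v => by ext i; simp

theorem abs_apply_le_znorm {d : ℕ} (v : Fin d → ℤ) (j : Fin d) : |(v j : ℝ)| ≤ znorm v :=
  PiLp.norm_apply_le (intToEuclidean d v) j

theorem znorm_nonneg {d : ℕ} (v : Fin d → ℤ) : 0 ≤ znorm v := norm_nonneg _

theorem summable_exp_neg_mul_znorm (d : ℕ) {c : ℝ} (hc : 0 < c) :
    Summable fun v : Fin d → ℤ => exp (-c * znorm v) := by
  set c' := c / (d + 1)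
  refine (summable_pi_prod_of_nonneg (f := fun _ (n : ℤ) => exp (-c' * |(n : ℝ)|))
    (fun _ _ => (exp_pos _).le) fun _ => summable_exp_neg_mul_abs (by positivity)).of_nonneg_of_le
    (fun _ => (exp_pos _).le) fun v => ?_
  -- `d + 1` rather than `d`, so that nothing is divided by zero when `d = 0`
  have hsum : ∑ j, |(v j : ℝ)| ≤ (d + 1) * znorm v := by
    calc ∑ j, |(v j : ℝ)| ≤ d * znorm v := by
          simpa using sum_le_card_nsmul univ _ _ fun j _ => abs_apply_le_znorm v j
      _ ≤ (d + 1) * znorm v := mul_le_mul_of_nonneg_right (by linarith) (znorm_nonneg v)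
  rw [← exp_sum, ← mul_sum, exp_le_exp]
  calc -c * znorm v = -c' * ((d + 1) * znorm v) := by simp only [c']; field_simp
    _ ≤ -c' * ∑ j, |(v j : ℝ)| :=
        mul_le_mul_of_nonpos_left hsum (by simp only [neg_nonpos]; positivity)

def increments {G : Type*} [Sub G] {k : ℕ} (x : Fin (k + 1) → G) : Fin k → G :=
  fun i => x i.castSucc - x i.succ

theorem increments_injOn {G : Type*} [AddGroup G] {k : ℕ} :
    Set.InjOn (increments (G := G) (k := k)) {x | x 0 = 0} := by
  intro x hx x' hx' h
  funext m
  induction m using Fin.induction with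
  | zero => rw [hx, hx']
  | succ i ih =>
    have := congrFun h i
    simp only [increments, ih] at this
    exact sub_right_injective this

theorem norm_sub_apply_zero_le_sum_norm_increments {E : Type*} [SeminormedAddCommGroup E] :
    ∀ {k : ℕ} (x : Fin (k + 1) → E) (m : Fin (k + 1)), ‖x m - x 0‖ ≤ ∑ i, ‖increments x i‖
  | 0, x, m => by simp [Fin.fin_one_eq_zero m]
  | k + 1, x, m => by
    rw [Fin.sum_univ_succ]
    have htail := norm_sub_apply_zero_le_sum_norm_increments (Fin.tail x)
    simp only [Fin.tail, increments] at htail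
    refine m.cases (by simpa using add_nonneg (norm_nonneg _) (sum_nonneg fun _ _ => norm_nonneg _))
      fun j => ?_
    calc ‖x j.succ - x 0‖
        ≤ ‖x j.succ - x (0 : Fin (k + 1)).succ‖ + ‖x (0 : Fin (k + 1)).succ - x 0‖ :=
          norm_sub_le_norm_sub_add_norm_sub _ _ _
      _ ≤ _ := by
        rw [add_comm, norm_sub_rev]
        exact add_le_add le_rfl (htail j)

theorem znorm_le_sum_znorm_increments {d k : ℕ} (x : Fin (k + 1) → Fin d → ℤ) (hx : x 0 = 0)
    (m : Fin (k + 1)) : znorm (x m) ≤ ∑ i, znorm (increments x i) := by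
  have h := norm_sub_apply_zero_le_sum_norm_increments (fun m => intToEuclidean d (x m)) m
  simp only [increments, ← map_sub, hx, map_zero, sub_zero] at h
  exact h

theorem pow_mul_exp_neg_mul_le {c t : ℝ} (hc : 0 < c) (ht : 0 ≤ t) (n : ℕ) :
    t ^ n * exp (-c * t) ≤ n ! * (2 / c) ^ n * exp (-(c / 2) * t) := by
  have h := pow_div_factorial_le_exp _ (by positivity : 0 ≤ c / 2 * t) n
  rw [div_le_iff₀ (by positivity)] at h
  calc t ^ n * exp (-c * t) = (2 / c) ^ n * (c / 2 * t) ^ n * exp (-c * t) := by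
        rw [← mul_pow]; field_simp
    _ ≤ (2 / c) ^ n * (exp (c / 2 * t) * n !) * exp (-c * t) := by gcongr
    _ = n ! * (2 / c) ^ n * exp (-(c / 2) * t) := by
        rw [mul_comm (exp _), mul_assoc, mul_assoc, ← exp_add]; ring_nf

theorem prod_norm_add_mul_exp_le {d k : ℕ} {c : ℝ} (hc : 0 < c) (x : Fin (k + 1) → Fin d → ℤ)
    (hx : x 0 = 0) :
    ∏ i : Fin k, (znorm (x i.castSucc) + znorm (x i.succ)) * exp (-c * znorm (increments x i)) ≤
      2 ^ k * k ! * (2 / c) ^ k * ∏ i, exp (-(c / 2) * znorm (increments x i)) := by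
  set S := ∑ i, znorm (increments x i)
  have hS : 0 ≤ S := sum_nonneg fun i _ => znorm_nonneg _
  have hxS := znorm_le_sum_znorm_increments x hx
  calc ∏ i : Fin k, (znorm (x i.castSucc) + znorm (x i.succ)) * exp (-c * znorm (increments x i))
      ≤ ∏ i : Fin k, 2 * S * exp (-c * znorm (increments x i)) := by
        refine prod_le_prod (fun i _ => ?_) fun i _ => ?_
        · exact mul_nonneg (add_nonneg (znorm_nonneg _) (znorm_nonneg _)) (exp_pos _).le
        · gcongr
          linarith [hxS i.castSucc, hxS i.succ]
    _ = 2 ^ k * (S ^ k * exp (-c * S)) := by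
        rw [prod_mul_distrib, prod_const, card_univ, Fintype.card_fin, ← exp_sum, ← mul_sum,
          mul_pow, mul_assoc]
    _ ≤ 2 ^ k * (k ! * (2 / c) ^ k * exp (-(c / 2) * S)) :=
        mul_le_mul_of_nonneg_left (pow_mul_exp_neg_mul_le hc hS k) (by positivity)
    _ = 2 ^ k * k ! * (2 / c) ^ k * ∏ i, exp (-(c / 2) * znorm (increments x i)) := by
        rw [← exp_sum, ← mul_sum, mul_assoc, mul_assoc, mul_assoc]

theorem stmt_12_general (d k : ℕ) (α : ℝ) (h0 : 0 < α) (h1 : α < 1) :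
    Summable (fun x : {x : Fin (k + 1) → Fin d → ℤ // x 0 = 0 ∧ x (Fin.last k) = 0} =>
      ∏ i : Fin k,
        (znorm (x.1 i.castSucc) + znorm (x.1 i.succ)) *
          α ^ znorm (x.1 i.castSucc - x.1 i.succ)) := by
  set c := -log α
  have hc : 0 < c := neg_pos.2 (log_neg h0 h1)
  have hα : ∀ t, α ^ t = exp (-c * t) := fun t => by rw [rpow_def_of_pos h0, neg_neg]
  have hweight : Summable fun y : Fin k → Fin d → ℤ =>
      2 ^ k * k ! * (2 / c) ^ k * ∏ i, exp (-(c / 2) * znorm (y i)) :=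
    (summable_pi_prod_of_nonneg (fun _ _ => (exp_pos _).le)
      fun _ => summable_exp_neg_mul_znorm d (half_pos hc)).mul_left _
  have hinj : Function.Injective
      fun x : {x : Fin (k + 1) → Fin d → ℤ // x 0 = 0 ∧ x (Fin.last k) = 0} => increments x.1 :=
    fun x x' h => Subtype.ext (increments_injOn x.2.1 x'.2.1 h)
  refine (hweight.comp_injective hinj).of_nonneg_of_le
    (fun x => prod_nonneg fun i _ => mul_nonneg (add_nonneg (znorm_nonneg _) (znorm_nonneg _))
      (rpow_nonneg h0.le _)) fun x => ?_
  simpa only [hα, increments, Function.comp_apply] using prod_norm_add_mul_exp_le hc x.1 x.2.1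

theorem stmt_12 (d k : ℕ) (hd : 0 < d) (hk : 0 < k) (α : ℝ) (h0 : 0 < α) (h1 : α < 1) :
    Summable (fun x : {x : Fin (k + 1) → Fin d → ℤ // x 0 = 0 ∧ x (Fin.last k) = 0} =>
      ∏ i : Fin k,
        (znorm (x.1 i.castSucc) + znorm (x.1 i.succ)) *
          α ^ znorm (x.1 i.castSucc - x.1 i.succ)) :=
  stmt_12_general d k α h0 h1
end

section
/- Fedosov's principle: let f be a bounded operator on a Hilbert space H with ‖f‖ ≤ 1, and suppose there is n ≥ 1 such that (1 − f*f)ⁿ and (1 − f f*)ⁿ are trace class. Then f is a Fredholm operator. -/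
open ContinuousLinearMap

/-- `f` is Fredholm iff it is invertible modulo the compact operators. -/
def IsFredholm {H : Type*} [NormedAddCommGroup H] [InnerProductSpace ℂ H] [CompleteSpace H]
    (f : H →L[ℂ] H) : Prop :=
  ∃ g : H →L[ℂ] H, IsCompactOperator (g * f - 1 : H →L[ℂ] H) ∧ IsCompactOperator (f * g - 1 : H →L[ℂ] H)

/-!
Write `A = 1 - f† f` and `B = 1 - f f†`; both are positive because `‖f‖ ≤ 1`. The geometric
sum `g = (∑_{k<n} A^k) f†` is a parametrix: `g f = 1 - A^n` and, since `f A = B f`,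
`f g = 1 - B^n`. A positive operator `T` with summable diagonal `⟨bᵢ, T bᵢ⟩` is compact: its
square root `√T` has `∑ ‖√T bᵢ‖² = ∑ ⟨bᵢ, T bᵢ⟩ < ∞`, so it is Hilbert–Schmidt, hence a norm
limit of finite-rank operators, and `T = √T √T`.
-/

open Filter Topology

namespace HilbertBasis

variable {𝕜 E F ι : Type*} [RCLike 𝕜] [NormedAddCommGroup E] [InnerProductSpace 𝕜 E]
  [NormedAddCommGroup F] [NormedSpace 𝕜 F] (b : HilbertBasis ι 𝕜 E)

theorem opNorm_le_sqrt_tsum_norm_sq (S : E →L[𝕜] F) (hS : Summable fun i => ‖S (b i)‖ ^ 2) :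
    ‖S‖ ≤ √(∑' i, ‖S (b i)‖ ^ 2) := by
  refine S.opNorm_le_bound (Real.sqrt_nonneg _) fun x => ?_
  have hSx : HasSum (fun i => b.repr x i • S (b i)) (S x) := by
    simpa using (b.hasSum_repr x).mapL S
  have hBessel : ∀ s : Finset ι, √(∑ i ∈ s, ‖b.repr x i‖ ^ 2) ≤ ‖x‖ := fun s => by
    simpa [b.repr_apply_apply] using
      Real.sqrt_le_sqrt (b.orthonormal.sum_inner_products_le x (s := s))
  refine le_of_tendsto' hSx.norm fun s => ?_
  calc ‖∑ i ∈ s, b.repr x i • S (b i)‖ ≤ ∑ i ∈ s, ‖b.repr x i‖ * ‖S (b i)‖ :=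
        norm_sum_le_of_le s fun i _ => (norm_smul _ _).le
    _ ≤ √(∑ i ∈ s, ‖b.repr x i‖ ^ 2) * √(∑ i ∈ s, ‖S (b i)‖ ^ 2) :=
        Real.sum_mul_le_sqrt_mul_sqrt _ _ _
    _ ≤ ‖x‖ * √(∑' i, ‖S (b i)‖ ^ 2) := by
        gcongr
        · exact hBessel s
        · exact hS.sum_le_tsum s fun i _ => by positivity
    _ = √(∑' i, ‖S (b i)‖ ^ 2) * ‖x‖ := mul_comm _ _

theorem isCompactOperator_of_summable_norm_sq [CompleteSpace F] (S : E →L[𝕜] F)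
    (hS : Summable fun i => ‖S (b i)‖ ^ 2) : IsCompactOperator S := by
  classical
  let T : Finset ι → E →L[𝕜] F := fun s => ∑ i ∈ s, (innerSL 𝕜 (b i)).smulRight (S (b i))
  have hT_compact (s : Finset ι) : IsCompactOperator (T s) :=
    Submodule.sum_mem (compactOperator (RingHom.id 𝕜) E F) fun i _ =>
      (isCompactOperator_of_locallyCompactSpace_dom (innerSL 𝕜 (b i))).clm_comp
        (toSpanSingleton 𝕜 (S (b i)))
  have hT_tail (s : Finset ι) :
      (fun j => ‖(S - T s) (b j)‖ ^ 2) = {j | j ∉ s}.indicator fun j => ‖S (b j)‖ ^ 2 := by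
    ext j
    by_cases hj : j ∈ s <;> simp [T, orthonormal_iff_ite.mp b.orthonormal, hj]
  have hT_tendsto : Tendsto T atTop (𝓝 S) := by
    rw [tendsto_iff_norm_sub_tendsto_zero]
    refine squeeze_zero (fun _ => norm_nonneg _) (fun s => ?_)
      (by simpa using (tendsto_tsum_compl_atTop_zero fun j => ‖S (b j)‖ ^ 2).sqrt)
    calc ‖T s - S‖ = ‖S - T s‖ := norm_sub_rev _ _
      _ ≤ √(∑' j, ‖(S - T s) (b j)‖ ^ 2) :=
        b.opNorm_le_sqrt_tsum_norm_sq _ (by rw [hT_tail]; exact hS.indicator _)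
      _ = √(∑' j : {j // j ∉ s}, ‖S (b j)‖ ^ 2) := by rw [hT_tail, ← tsum_subtype]; rfl
  exact isCompactOperator_of_tendsto hT_tendsto (Eventually.of_forall hT_compact)

end HilbertBasis

theorem ContinuousLinearMap.isCompactOperator_of_nonneg_of_summable_re_inner
    {H ι : Type*} [NormedAddCommGroup H] [InnerProductSpace ℂ H] [CompleteSpace H]
    (b : HilbertBasis ι ℂ H) {T : H →L[ℂ] H} (hT : 0 ≤ T)
    (hsum : Summable fun i => (inner ℂ (b i) (T (b i))).re) : IsCompactOperator T := by
  set s := CFC.sqrt T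
  have hss : s * s = T := CFC.sqrt_mul_sqrt_self T
  have hs_norm (x : H) : ‖s x‖ ^ 2 = (inner ℂ x (T x)).re := by
    have hs : IsSelfAdjoint s := .of_nonneg (CFC.sqrt_nonneg T)
    rw [s.apply_norm_sq_eq_inner_adjoint_right, hs.adjoint_eq, ← mul_def, hss]
    rfl
  rw [← hss]
  exact (b.isCompactOperator_of_summable_norm_sq s (by simpa only [hs_norm])).comp_clm s

theorem CStarAlgebra.one_sub_star_mul_self_nonneg {A : Type*} [CStarAlgebra A] [PartialOrder A]
    [StarOrderedRing A] {a : A} (ha : ‖a‖ ≤ 1) : 0 ≤ 1 - star a * a := by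
  refine sub_nonneg.2 <| (norm_le_one_iff_of_nonneg _ (star_mul_self_nonneg a)).1 ?_
  rw [CStarRing.norm_star_mul_self]
  exact mul_le_one₀ ha (norm_nonneg a) ha

section Parametrix

variable {R : Type*} [Ring R] (a b : R) (n : ℕ)

theorem geom_sum_one_sub_mul_mul_mul :
    (∑ k ∈ Finset.range n, (1 - b * a) ^ k) * b * a = 1 - (1 - b * a) ^ n := by
  simpa [mul_assoc] using geom_sum_mul_neg (1 - b * a) n

theorem mul_geom_sum_one_sub_mul_mul :
    a * ((∑ k ∈ Finset.range n, (1 - b * a) ^ k) * b) = 1 - (1 - a * b) ^ n := by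
  have hsemiconj : SemiconjBy a (1 - b * a) (1 - a * b) := by
    simp only [SemiconjBy, mul_sub, sub_mul, mul_one, one_mul, mul_assoc]
  rw [← mul_assoc, Finset.mul_sum, Finset.sum_congr rfl fun k _ => (hsemiconj.pow_right k).eq,
    ← Finset.sum_mul]
  exact geom_sum_one_sub_mul_mul_mul b a n

end Parametrix

theorem isFredholm_of_isCompactOperator_one_sub_pow {H : Type*} [NormedAddCommGroup H]
    [InnerProductSpace ℂ H] [CompleteSpace H] (f : H →L[ℂ] H) (n : ℕ)
    (h1 : IsCompactOperator ⇑((1 - adjoint f * f) ^ n : H →L[ℂ] H))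
    (h2 : IsCompactOperator ⇑((1 - f * adjoint f) ^ n : H →L[ℂ] H)) : _root_.IsFredholm f := by
  refine ⟨(∑ k ∈ Finset.range n, (1 - adjoint f * f) ^ k) * adjoint f, ?_, ?_⟩
  · rw [geom_sum_one_sub_mul_mul_mul, sub_sub_cancel_left]
    exact h1.neg
  · rw [mul_geom_sum_one_sub_mul_mul, sub_sub_cancel_left]
    exact h2.neg

theorem stmt_15_general {H : Type*} [NormedAddCommGroup H] [InnerProductSpace ℂ H] [CompleteSpace H]
    {ι : Type*} (b : HilbertBasis ι ℂ H)
    (f : H →L[ℂ] H) (hf : ‖f‖ ≤ 1) (n : ℕ)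
    (h1 : Summable fun i =>
      (inner ℂ (b i) ((((1 : H →L[ℂ] H) - adjoint f * f) ^ n) (b i)) : ℂ).re)
    (h2 : Summable fun i =>
      (inner ℂ (b i) ((((1 : H →L[ℂ] H) - f * adjoint f) ^ n) (b i)) : ℂ).re) :
    _root_.IsFredholm f := by
  have hA : 0 ≤ (1 - adjoint f * f : H →L[ℂ] H) := by
    simpa [star_eq_adjoint] using CStarAlgebra.one_sub_star_mul_self_nonneg hf
  have hB : 0 ≤ (1 - f * adjoint f : H →L[ℂ] H) := by
    simpa [star_eq_adjoint] using
      CStarAlgebra.one_sub_star_mul_self_nonneg (a := star f) (by simpa using hf)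
  exact isFredholm_of_isCompactOperator_one_sub_pow f n
    (isCompactOperator_of_nonneg_of_summable_re_inner b (CStarAlgebra.pow_nonneg hA n) h1)
    (isCompactOperator_of_nonneg_of_summable_re_inner b (CStarAlgebra.pow_nonneg hB n) h2)

theorem stmt_15 {H : Type*} [NormedAddCommGroup H] [InnerProductSpace ℂ H] [CompleteSpace H]
    {ι : Type*} [Countable ι] (b : HilbertBasis ι ℂ H)
    (f : H →L[ℂ] H) (hf : ‖f‖ ≤ 1) (n : ℕ) (hn : 1 ≤ n)
    (h1 : Summable fun i =>
      (inner ℂ (b i) ((((1 : H →L[ℂ] H) - adjoint f * f) ^ n) (b i)) : ℂ).re)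
    (h2 : Summable fun i =>
      (inner ℂ (b i) ((((1 : H →L[ℂ] H) - f * adjoint f) ^ n) (b i)) : ℂ).re) :
    _root_.IsFredholm f :=
  stmt_15_general b f hf n h1 h2
end

section
/- Let f = w·|f| be the polar decomposition of a bounded Hilbert space operator f, where w is a partial isometry with w*·w·|f| = |f|. Then for every n ≥ 1, (1 − f·f*)ⁿ = 1 − w·w* + w·(1 − |f|²)ⁿ·w*. -/
/-- Algebraic form of the polar-decomposition identity used in the Fedosov formula:
if `f = w * a` with `a = |f|` self-adjoint, `w` a partial isometry with `w* w a = a`,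
then `(1 - f f*)^n = 1 - w w* + w (1 - a²)^n w*`. -/
theorem stmt_17 {A : Type*} [Ring A] [StarRing A]
    (f w a : A) (hf : f = w * a) (ha : star a = a)
    (hw : w * star w * w = w) (hwa : star w * w * a = a) (n : ℕ) (hn : 1 ≤ n) :
    (1 - f * star f) ^ n = 1 - w * star w + w * (1 - a ^ 2) ^ n * star w := by
  have hff : f * star f = w * (a ^ 2 * star w) := by
    rw [hf, star_mul, ha]; rw [pow_two]; noncomm_ring
  have hwa3 : ∀ x : A, star w * (w * (a ^ 2 * x)) = a ^ 2 * x := by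
    intro x
    have h2 : star w * w * a ^ 2 = a ^ 2 := by
      rw [pow_two, ← mul_assoc, hwa]
    calc star w * (w * (a ^ 2 * x)) = (star w * w * a ^ 2) * x := by noncomm_ring
    _ = a ^ 2 * x := by rw [h2]
  have hw1 : ∀ x : A, w * (star w * (w * x)) = w * x := by
    intro x
    calc w * (star w * (w * x)) = (w * star w * w) * x := by noncomm_ring
    _ = w * x := by rw [hw]
  rw [hff]
  induction n with
  | zero => omega
  | succ n ih =>
    rcases Nat.eq_zero_or_pos n with h0 | h0
    · subst h0
      simp [pow_one]
      noncomm_ring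
    · rw [pow_succ (1 - w * (a ^ 2 * star w)) n, ih h0, pow_succ (1 - a ^ 2) n]
      have e1 : w * (star w * (w * (a ^ 2 * star w))) = w * (a ^ 2 * star w) := hw1 _
      have e2 : star w * (w * (a ^ 2 * star w)) = a ^ 2 * star w := hwa3 _
      calc (1 - w * star w + w * (1 - a ^ 2) ^ n * star w) * (1 - w * (a ^ 2 * star w))
          = 1 - w * (a ^ 2 * star w) - w * star w
            + w * (star w * (w * (a ^ 2 * star w)))
            + w * (1 - a ^ 2) ^ n * star w
            - w * (1 - a ^ 2) ^ n * (star w * (w * (a ^ 2 * star w))) := by noncomm_ring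
        _ = 1 - w * (a ^ 2 * star w) - w * star w + w * (a ^ 2 * star w)
            + w * (1 - a ^ 2) ^ n * star w
            - w * (1 - a ^ 2) ^ n * (a ^ 2 * star w) := by rw [e1, e2]
        _ = 1 - w * star w + w * ((1 - a ^ 2) ^ n * (1 - a ^ 2)) * star w := by noncomm_ring
end
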